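/- arXiv:math/0610836 — 2 statements merged into one kernel-verified Lean document; each statement's English description precedes it below -/
import Mathlib

section
/- Let A ∈ ℤ^{d×n}, let 𝒞 = {c₁,…,c_s} ⊆ ℤ^n_{≥0} be a finite set of vectors, let M ⊆ ℤ^d be an additive monoid, and let b ∈ M. If the truncated fiber tr_𝒞(P^I_{A,b}) is indecomposable with respect to M (there are no b₁, b₂ ∈ M ∖ {0} with b = b₁ + b₂ and tr_𝒞(P^I_{A,b}) ⊆ tr_𝒞(P^I_{A,b₁}) + tr_𝒞(P^I_{A,b₂})), then the fiber P^I_{A,b} is atomic with respect to M (there are no b₁, b₂ ∈ M ∖ {0} with b = b₁ + b₂ and P^I_{A,b} = P^I_{A,b₁} + P^I_{A,b₂}). -/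
open Pointwise

/-- The fiber `P^I_{A,b} = {z ∈ ℤ^n : z ≥ 0, Az = b}` of `b` under the matrix `A`. -/
def fiber {d n : ℕ} (A : Matrix (Fin d) (Fin n) ℤ) (b : Fin d → ℤ) : Set (Fin n → ℤ) :=
  {z | 0 ≤ z ∧ A.mulVec z = b}

/-- `u` reduces `v`, written `u ⊑ v`: componentwise `u⁽ⁱ⁾v⁽ⁱ⁾ ≥ 0` and `|u⁽ⁱ⁾| ≤ |v⁽ⁱ⁾|`. -/
def Reduces {ι : Type*} (u v : ι → ℤ) : Prop :=
  ∀ i, 0 ≤ u i * v i ∧ |u i| ≤ |v i|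

/-- The truncation `tr_𝒞(S)` of a set `S ⊆ ℤ^n` with respect to a set of vectors `𝒞`. -/
def trunc {ι : Type*} (C : Set (ι → ℤ)) (S : Set (ι → ℤ)) : Set (ι → ℤ) :=
  {z ∈ S | ¬ ∃ c ∈ C, Reduces c z}

lemma reduces_add {ι : Type*} {c z₁ z₂ : ι → ℤ} (hc : (0:ι → ℤ) ≤ c)
    (h1 : (0:ι → ℤ) ≤ z₁) (h2 : (0:ι → ℤ) ≤ z₂) (hr : Reduces c z₁) :
    Reduces c (z₁ + z₂) := by
  intro i
  have hci := hc i
  have h1i := h1 i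
  have h2i := h2 i
  have := hr i
  rw [abs_of_nonneg hci, abs_of_nonneg h1i] at this
  constructor
  · exact mul_nonneg hci (by simpa using add_nonneg h1i h2i)
  · rw [abs_of_nonneg hci, abs_of_nonneg (by simpa using add_nonneg h1i h2i)]
    simpa using le_add_of_le_of_nonneg this.2 h2i

/-- If the truncated fiber `tr_𝒞(P^I_{A,b})` is indecomposable with respect to the monoid
`M`, then the fiber `P^I_{A,b}` is atomic with respect to `M`. -/
theorem atomic_of_truncated_indecomposable
    {d n : ℕ} (A : Matrix (Fin d) (Fin n) ℤ)
    (C : Finset (Fin n → ℤ)) (hC : ∀ c ∈ C, (0 : Fin n → ℤ) ≤ c)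
    (M : AddSubmonoid (Fin d → ℤ)) (b : Fin d → ℤ) (hb : b ∈ M)
    (hind : ¬ ∃ b₁ b₂ : Fin d → ℤ, b₁ ∈ M ∧ b₂ ∈ M ∧ b₁ ≠ 0 ∧ b₂ ≠ 0 ∧ b = b₁ + b₂ ∧
      trunc (↑C) (fiber A b) ⊆ trunc (↑C) (fiber A b₁) + trunc (↑C) (fiber A b₂)) :
    ¬ ∃ b₁ b₂ : Fin d → ℤ, b₁ ∈ M ∧ b₂ ∈ M ∧ b₁ ≠ 0 ∧ b₂ ≠ 0 ∧ b = b₁ + b₂ ∧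
      fiber A b = fiber A b₁ + fiber A b₂ := by
  rintro ⟨b₁, b₂, hm1, hm2, hn1, hn2, hbeq, hfib⟩
  apply hind
  refine ⟨b₁, b₂, hm1, hm2, hn1, hn2, hbeq, ?_⟩
  rintro z ⟨hz, hnored⟩
  have hz' : z ∈ fiber A b₁ + fiber A b₂ := hfib ▸ hz
  obtain ⟨z₁, hz1, z₂, hz2, rfl⟩ := hz'
  refine ⟨z₁, ⟨hz1, ?_⟩, z₂, ⟨hz2, ?_⟩, rfl⟩
  · rintro ⟨c, hcC, hr⟩
    exact hnored ⟨c, hcC, reduces_add (hC c hcC) hz1.1 hz2.1 hr⟩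
  · rintro ⟨c, hcC, hr⟩
    refine hnored ⟨c, hcC, ?_⟩
    have := reduces_add (hC c hcC) hz2.1 hz1.1 hr
    simpa [add_comm z₂ z₁] using this
end

section
/- Let A ∈ ℤ^{d×n} and Π ∈ ℤ_{≥0}^{m×n}. Let 𝒞 = {c₁,…,c_t} ⊆ ℤ^n_{≥0} be a finite set of vectors and let 𝒟 ⊆ ℤ^m_{≥0} be a set of vectors such that for every c ∈ 𝒞 there exists d ∈ 𝒟 with d ⊑ Πc. Then for every b ∈ ℤ^d, tr_𝒟(Π·P^I_{A,b}) ⊆ Π·tr_𝒞(P^I_{A,b}). -/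
open Pointwise

/-- If for every `c ∈ 𝒞` there is `d ∈ 𝒟` with `d ⊑ Πc`, then for every right-hand side
`b`, `tr_𝒟(Π·P^I_{A,b}) ⊆ Π·tr_𝒞(P^I_{A,b})`. -/
theorem trunc_image_subset_image_trunc
    {d n m : ℕ}
    (A : Matrix (Fin d) (Fin n) ℤ) (Pr : Matrix (Fin m) (Fin n) ℤ)
    (hPr : ∀ i j, 0 ≤ Pr i j)
    (C : Finset (Fin n → ℤ)) (hC : ∀ c ∈ C, (0 : Fin n → ℤ) ≤ c)
    (D : Set (Fin m → ℤ)) (hD : ∀ v ∈ D, (0 : Fin m → ℤ) ≤ v)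
    (hCD : ∀ c ∈ C, ∃ v ∈ D, Reduces v (Pr.mulVec c)) :
    ∀ b : Fin d → ℤ,
      trunc D (Pr.mulVec '' fiber A b) ⊆ Pr.mulVec '' trunc (↑C) (fiber A b) := by
  intro b y hy
  obtain ⟨⟨z, hz, rfl⟩, hnred⟩ := hy
  refine ⟨z, ⟨hz, ?_⟩, rfl⟩
  rintro ⟨c, hcC, hcz⟩
  have hcC' : c ∈ C := hcC
  obtain ⟨v, hvD, hvc⟩ := hCD c hcC'
  -- c ≤ z componentwise (both nonneg)
  have hc0 := hC c hcC'
  have hz0 := hz.1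
  have hcle : ∀ j, c j ≤ z j := by
    intro j
    have h1 := (hcz j).2
    rw [abs_of_nonneg (hc0 j), abs_of_nonneg (hz0 j)] at h1
    exact h1
  -- Πc ≤ Πz componentwise, both nonneg
  have hPc0 : ∀ i, 0 ≤ Pr.mulVec c i := by
    intro i
    simp only [Matrix.mulVec, dotProduct]
    exact Finset.sum_nonneg fun j _ => mul_nonneg (hPr i j) (hc0 j)
  have hPz0 : ∀ i, 0 ≤ Pr.mulVec z i := by
    intro i
    simp only [Matrix.mulVec, dotProduct]
    exact Finset.sum_nonneg fun j _ => mul_nonneg (hPr i j) (hz0 j)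
  have hPle : ∀ i, Pr.mulVec c i ≤ Pr.mulVec z i := by
    intro i
    simp only [Matrix.mulVec, dotProduct]
    exact Finset.sum_le_sum fun j _ => mul_le_mul_of_nonneg_left (hcle j) (hPr i j)
  exact hnred ⟨v, hvD, fun i => by
    have hv0 := hD v hvD i
    constructor
    · exact mul_nonneg hv0 (hPz0 i)
    · calc |v i| ≤ |Pr.mulVec c i| := (hvc i).2
        _ = Pr.mulVec c i := abs_of_nonneg (hPc0 i)
        _ ≤ Pr.mulVec z i := hPle i
        _ = |Pr.mulVec z i| := (abs_of_nonneg (hPz0 i)).symm⟩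
end
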